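/- For all x ∈ M and y ∈ N, the identity x ⊗ (sy) + Σ_{k=0}^{p−2} ((s − s_k)(dx)) ⊗ t^k y = s( x ⊗ t^{p−1} y ) holds in M ⊗_ℤ N. -/

import Mathlib

open TensorProduct Finset

/-!
Since `(s - s_k) d = (1 - t^p) - (1 - t^(k+1)) = t^(k+1) - 1`, the left side telescopes to
`x ⊗ t^(p-1) y + Σ_{k < p-1} t^(k+1) x ⊗ t^k y`. Splitting off the term `j = 0` of
`s (x ⊗ t^(p-1) y) = Σ_j t^j x ⊗ t^(j+p-1) y` and using `t^p = 1` gives the same expression.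
-/

theorem geom_sum_sub_geom_sum_mul_one_sub {R : Type*} [Ring R] (a : R) (m n : ℕ) :
    (∑ j ∈ range m, a ^ j - ∑ j ∈ range n, a ^ j) * (1 - a) = a ^ n - a ^ m := by
  rw [sub_mul, geom_sum_mul_neg, geom_sum_mul_neg, sub_sub_sub_cancel_left]

theorem pow_succ_add_of_pow_succ_eq_one {G : Type*} [Monoid G] {t : G} {n : ℕ}
    (ht : t ^ (n + 1) = 1) (k : ℕ) : t ^ (k + 1 + n) = t ^ k := by
  rw [add_assoc, add_comm 1 n, pow_add, ht, mul_one]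

theorem geom_sum_sub_geom_sum_apply_one_sub_apply {R M : Type*} [Ring R] [AddCommGroup M]
    [Module R M] {t : Module.End R M} {n : ℕ} (ht : t ^ (n + 1) = 1) (k : ℕ) (x : M) :
    ((∑ j ∈ range (n + 1), t ^ j) - ∑ j ∈ range (k + 1), t ^ j) ((1 - t) x) =
      (t ^ (k + 1)) x - x := by
  rw [← Module.End.mul_apply, geom_sum_sub_geom_sum_mul_one_sub, ht, LinearMap.sub_apply,
    Module.End.one_apply]

theorem geom_sum_map_apply_tmul_pow {R M N : Type*} [CommSemiring R] [AddCommMonoid M]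
    [AddCommMonoid N] [Module R M] [Module R N] {tM : Module.End R M} {tN : Module.End R N}
    {n : ℕ} (htN : tN ^ (n + 1) = 1) (x : M) (y : N) :
    (∑ j ∈ range (n + 1), map tM tN ^ j) (x ⊗ₜ[R] (tN ^ n) y) =
      x ⊗ₜ[R] (tN ^ n) y + ∑ k ∈ range n, (tM ^ (k + 1)) x ⊗ₜ[R] (tN ^ k) y := by
  simp only [LinearMap.sum_apply, TensorProduct.map_pow, map_tmul, ← Module.End.mul_apply,
    ← pow_add]
  rw [sum_range_succ', add_comm]
  simp only [pow_succ_add_of_pow_succ_eq_one htN, pow_zero, zero_add, Module.End.one_apply]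

theorem sum_smash_d_tensor
    (p : ℕ)
    (M N : Type) [AddCommGroup M] [AddCommGroup N]
    (tM : Module.End ℤ M) (tN : Module.End ℤ N)
    (htM : tM ^ p = 1) (htN : tN ^ p = 1)
    (x : M) (y : N) :
    (x ⊗ₜ[ℤ] ((∑ j ∈ range p, tN ^ j) y)) +
      ∑ k ∈ range (p - 1),
        ((((∑ j ∈ range p, tM ^ j) - ∑ j ∈ range (k + 1), tM ^ j) ((1 - tM) x)) ⊗ₜ[ℤ]
          ((tN ^ k) y))
      =
      (∑ j ∈ range p, (TensorProduct.map tM tN) ^ j)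
        (x ⊗ₜ[ℤ] ((tN ^ (p - 1)) y)) := by
  cases p with
  | zero => simp
  | succ n =>
    rw [Nat.add_sub_cancel, geom_sum_map_apply_tmul_pow htN, sum_range_succ, LinearMap.add_apply,
      tmul_add]
    simp only [geom_sum_sub_geom_sum_apply_one_sub_apply htM, sub_tmul, sum_sub_distrib,
      LinearMap.sum_apply, tmul_sum]
    abel
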